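/- With t := ε(1) and δ := ω·(α - σ(α)), one has algebraMap K R (t) · δ · σ(ω) = σ(ω) - ω; equivalently, since σ(ω) is a unit of R, algebraMap K R (t) · δ = 1 - ω·σ(ω)⁻¹. -/

import Mathlib

/-! Write `ω = a + b α`. Since `σ ω = (a + b s) - b α`, the norm `N = ω σ(ω) = a² + a b s + b² p`
lies in `K`, and `K`-linearity of `ε` together with `ε ω = 0`, `ε (ω α) = 1` gives
`t N = ε (ω σ(ω)) = -b`. Hence `t δ σ(ω) = t N (α - σ α) = -b (2α - s) = σ ω - ω`. -/

open Polynomial TensorProduct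

noncomputable section

variable {K : Type*} [CommRing K]

/-- The quadratic `K`-algebra `K[X]/(X² - s·X + p)`. -/
abbrev Quad (s p : K) : Type _ := AdjoinRoot (X ^ 2 - C s * X + C p)

/-- The image of `X`, i.e. the generator `α`. -/
def qα (s p : K) : Quad s p := AdjoinRoot.root _

lemma quad_aeval_root (s p : K) :
    (aeval (qα s p)) (X ^ 2 - C s * X + C p) = 0 := by
  simp [qα, AdjoinRoot.aeval_eq, AdjoinRoot.mk_self]

/-- The involution `σ` of the quadratic algebra, with `σ α = s - α`. -/
def qσ (s p : K) : Quad s p →ₐ[K] Quad s p :=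
  AdjoinRoot.liftAlgHom _ (Algebra.ofId K (Quad s p)) (algebraMap K (Quad s p) s - qα s p) (by
    have h' : (aeval (algebraMap K (Quad s p) s - qα s p)) (X ^ 2 - C s * X + C p) = 0 := by
      have h := quad_aeval_root s p
      simp only [map_add, map_sub, map_mul, map_pow, aeval_X, aeval_C] at h ⊢
      linear_combination h
    exact h')

lemma exists_eq_algebraMap_add_mul_qα (s p : K) (x : Quad s p) :
    ∃ a b : K, x = algebraMap K _ a + algebraMap K _ b * qα s p := by
  nontriviality Quad s p
  have : Nontrivial K := Module.nontrivial K (Quad s p)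
  have hm : (X ^ 2 - C s * X + C p).Monic := by monicity!
  obtain ⟨f, hdeg, rfl⟩ := (AdjoinRoot.powerBasis' hm).exists_eq_aeval x
  have h2 : (X ^ 2 - C s * X + C p : K[X]).natDegree = 2 := by compute_degree!
  rw [AdjoinRoot.powerBasis'_dim, h2] at hdeg
  obtain ⟨b, a, rfl⟩ := exists_eq_X_add_C_of_natDegree_le_one (by omega : f.natDegree ≤ 1)
  refine ⟨a, b, ?_⟩
  simp only [AdjoinRoot.powerBasis'_gen, map_add, map_mul, aeval_C, aeval_X, qα]
  ring

lemma qσ_qα (s p : K) : qσ s p (qα s p) = algebraMap K (Quad s p) s - qα s p := by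
  simp [qσ, qα]

lemma qα_sq (s p : K) :
    qα s p ^ 2 = algebraMap K (Quad s p) s * qα s p - algebraMap K (Quad s p) p := by
  linear_combination
    (by simpa [← AdjoinRoot.algebraMap_eq] using quad_aeval_root s p : _ = (0 : Quad s p))

section Coordinates

variable (s p a b : K)

local notation "ι" => algebraMap K (Quad s p)

lemma qσ_algebraMap_add_mul_qα :
    qσ s p (ι a + ι b * qα s p) = ι (a + b * s) - ι b * qα s p := by
  simp only [map_add, map_mul, AlgHom.commutes, qσ_qα]
  ring

lemma algebraMap_add_mul_qα_mul_qσ :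
    (ι a + ι b * qα s p) * qσ s p (ι a + ι b * qα s p) = ι (a * a + a * b * s + b * b * p) := by
  rw [qσ_algebraMap_add_mul_qα]
  simp only [map_add, map_mul]
  linear_combination (-ι b * ι b) * qα_sq s p

end Coordinates

lemma algebraMap_apply_one_mul_mul_qσ (s p : K) (ω : Quad s p) (ε : Quad s p →ₗ[K] K)
    (hω : ε ω = 0) (hωα : ε (ω * qα s p) = 1) :
    algebraMap K (Quad s p) (ε 1) * (ω * (qα s p - qσ s p (qα s p))) * qσ s p ω
      = qσ s p ω - ω := by
  obtain ⟨a, b, hab⟩ := exists_eq_algebraMap_add_mul_qα s p ω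
  set N := a * a + a * b * s + b * b * p
  have hσω : qσ s p ω = algebraMap K _ (a + b * s) - algebraMap K _ b * qα s p := by
    rw [hab, qσ_algebraMap_add_mul_qα]
  have hnorm : ω * qσ s p ω = algebraMap K _ N := by
    rw [hab, algebraMap_add_mul_qα_mul_qσ]
  have hεN : ε 1 * N = -b := calc
    ε 1 * N = ε (algebraMap K _ N) := by
      rw [Algebra.algebraMap_eq_smul_one, map_smul, smul_eq_mul, mul_comm]
    _ = ε ((a + b * s) • ω - b • (ω * qα s p)) := by
      rw [← hnorm, hσω, Algebra.smul_def, Algebra.smul_def]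
      congr 1
      ring
    _ = -b := by simp [hω, hωα]
  calc algebraMap K (Quad s p) (ε 1) * (ω * (qα s p - qσ s p (qα s p))) * qσ s p ω
      = algebraMap K _ (ε 1 * N) * (qα s p - qσ s p (qα s p)) := by
        rw [map_mul, ← hnorm]
        ring
    _ = qσ s p ω - ω := by
        rw [hεN, hσω, hab, qσ_qα, map_neg, map_add, map_mul]
        ring

lemma eq_one_sub_mul_inverse_of_mul_eq_sub {R : Type*} [Ring R] {c u w : R} (hu : IsUnit u)
    (h : c * u = u - w) : c = 1 - w * Ring.inverse u := by
  calc c = c * u * Ring.inverse u := by rw [mul_assoc, Ring.mul_inverse_cancel u hu, mul_one]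
    _ = 1 - w * Ring.inverse u := by rw [h, sub_mul, Ring.mul_inverse_cancel u hu]

/-- With `t = ε 1` and `δ = ω·(α - σ α)`, one has `t·δ·σ(ω) = σ(ω) - ω`;
equivalently, since `σ(ω)` is a unit, `t·δ = 1 - ω·σ(ω)⁻¹`. -/
theorem stmt4 (s p : K) (ω : (Quad s p)ˣ) (ε : Quad s p →ₗ[K] K)
    (hω : ε (ω : Quad s p) = 0) (hωα : ε ((ω : Quad s p) * qα s p) = 1) :
    algebraMap K (Quad s p) (ε 1) *
        ((ω : Quad s p) * (qα s p - qσ s p (qα s p))) * qσ s p (ω : Quad s p)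
      = qσ s p (ω : Quad s p) - (ω : Quad s p) ∧
    IsUnit (qσ s p (ω : Quad s p)) ∧
    algebraMap K (Quad s p) (ε 1) * ((ω : Quad s p) * (qα s p - qσ s p (qα s p)))
      = 1 - (ω : Quad s p) * Ring.inverse (qσ s p (ω : Quad s p)) := by
  have key := algebraMap_apply_one_mul_mul_qσ s p ω ε hω hωα
  have hunit : IsUnit (qσ s p (ω : Quad s p)) := ω.isUnit.map (qσ s p)
  exact ⟨key, hunit, eq_one_sub_mul_inverse_of_mul_eq_sub hunit key⟩

end
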